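/- Let $(B_r)_{r \geq 1}$ be a sequence of standard Brownian motions on a common probability space, and fix $T > 0$, $C > 0$, $\epsilon \in (0, 1/4)$. Then almost surely, for all sufficiently large $r$, every pair $t_1, t_2 \in [0, T \log r]$ with $|t_2 - t_1| \le C r^{-1/2 + \epsilon}$ satisfies $|B_r(t_2) - B_r(t_1)| < r^{-1/8}$. -/

import Mathlib

open MeasureTheory ProbabilityTheory

/-- A standard one-dimensional Brownian motion: starts at 0, has continuous paths,
Gaussian increments of variance `t - s`, and independent increments. -/
def IsStandardBM {Ω : Type*} [MeasureSpace Ω] (W : ℝ → Ω → ℝ) : Prop :=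
  (∀ ω, W 0 ω = 0) ∧
  (∀ ω, Continuous fun t => W t ω) ∧
  (∀ s t : ℝ, 0 ≤ s → s ≤ t →
    Measure.map (fun ω => W t ω - W s ω) MeasureTheory.volume
      = gaussianReal 0 (Real.toNNReal (t - s))) ∧
  (∀ n : ℕ, ∀ t : ℕ → ℝ, Monotone t → 0 ≤ t 0 →
    iIndepFun
      (fun (i : Fin n) ω => W (t (i + 1)) ω - W (t i) ω) MeasureTheory.volume)

open Filter Real Set Topology

/-! Dyadic chaining: a continuous path whose increments over the dyadic intervals of length
`2⁻⁽ⁿ⁰⁺ʲ⁾` are at most `a (3/4)ʲ` oscillates by at most `7a` at scale `2⁻ⁿ⁰`. For a Brownian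
motion each such increment is centred Gaussian with variance `2⁻⁽ⁿ⁰⁺ʲ⁾`, so a union bound over the
`≈ L 2ⁿ⁰⁺ʲ` intervals of `[0, L]` bounds the failure probability by
`4 (L + 1) 2ⁿ⁰ exp(-a² 2ⁿ⁰ / 2)`. At scale `δ = C r^(-1/2+ε)` with `a ≍ r^(-1/8)` this is a
polynomial in `r` times `exp(-c r^(1/4-ε))`, which is summable, and Borel–Cantelli concludes. -/

namespace ProbabilityTheory

lemma hasSubgaussianMGF_of_map_eq_gaussianReal {Ω : Type*} [MeasurableSpace Ω] {μ : Measure Ω}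
    {X : Ω → ℝ} {v : NNReal} (hX : μ.map X = gaussianReal 0 v) : HasSubgaussianMGF X v μ := by
  have hXm : AEMeasurable X μ := aemeasurable_of_map_neZero (by rw [hX]; infer_instance)
  refine (HasSubgaussianMGF.id_map_iff hXm).1 ⟨fun t ↦ ?_, fun t ↦ ?_⟩
  · simpa [hX] using integrable_exp_mul_gaussianReal (μ := 0) (v := v) t
  · rw [mgf_gaussianReal (p := μ.map X) (X := id) (by rw [Measure.map_id, hX])]
    simp

lemma measure_abs_ge_le_of_map_eq_gaussianReal {Ω : Type*} [MeasurableSpace Ω] {μ : Measure Ω}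
    [IsFiniteMeasure μ] {X : Ω → ℝ} {v : NNReal} (hX : μ.map X = gaussianReal 0 v) {c : ℝ}
    (hc : 0 ≤ c) : μ {ω | c ≤ |X ω|} ≤ ENNReal.ofReal (2 * exp (-c ^ 2 / (2 * v))) := by
  have hsub := hasSubgaussianMGF_of_map_eq_gaussianReal hX
  have hsplit : {ω | c ≤ |X ω|} ⊆ {ω | c ≤ X ω} ∪ {ω | c ≤ (-X) ω} := fun ω hω ↦ by
    simpa [le_abs] using hω
  calc μ {ω | c ≤ |X ω|} ≤ μ {ω | c ≤ X ω} + μ {ω | c ≤ (-X) ω} :=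
      (measure_mono hsplit).trans (measure_union_le _ _)
    _ = ENNReal.ofReal (μ.real {ω | c ≤ X ω} + μ.real {ω | c ≤ (-X) ω}) := by
      rw [ENNReal.ofReal_add measureReal_nonneg measureReal_nonneg, ofReal_measureReal,
        ofReal_measureReal]
    _ ≤ ENNReal.ofReal (2 * exp (-c ^ 2 / (2 * v))) := by
      gcongr
      linarith [hsub.measure_ge_le hc, hsub.neg.measure_ge_le hc]

end ProbabilityTheory

noncomputable def dyadicFloor (n : ℕ) (t : ℝ) : ℝ := ⌊t * 2 ^ n⌋₊ / 2 ^ n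

lemma dyadicFloor_le {t : ℝ} (ht : 0 ≤ t) (n : ℕ) : dyadicFloor n t ≤ t := by
  rw [dyadicFloor, div_le_iff₀ (by positivity)]
  exact Nat.floor_le (by positivity)

lemma lt_dyadicFloor_add (n : ℕ) (t : ℝ) : t < dyadicFloor n t + 1 / 2 ^ n := by
  rw [dyadicFloor, ← add_div, lt_div_iff₀ (by positivity)]
  exact Nat.lt_floor_add_one _

lemma tendsto_dyadicFloor {t : ℝ} (ht : 0 ≤ t) :
    Tendsto (fun n ↦ dyadicFloor n t) atTop (𝓝 t) := by
  have hlow : Tendsto (fun n : ℕ ↦ t - 1 / 2 ^ n) atTop (𝓝 t) := by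
    simpa using tendsto_const_nhds.sub
      (tendsto_pow_atTop_nhds_zero_of_lt_one (by norm_num : (0 : ℝ) ≤ 1 / 2) (by norm_num))
  refine tendsto_of_tendsto_of_tendsto_of_le_of_le hlow tendsto_const_nhds (fun n ↦ ?_)
    (fun n ↦ dyadicFloor_le ht n)
  linarith [lt_dyadicFloor_add n t]

lemma dyadicFloor_succ (n : ℕ) (t : ℝ) : ∃ k : ℕ, dyadicFloor n t = k / 2 ^ (n + 1) ∧
    (dyadicFloor (n + 1) t = dyadicFloor n t ∨ dyadicFloor (n + 1) t = (k + 1) / 2 ^ (n + 1)) := by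
  set m := ⌊t * 2 ^ (n + 1)⌋₊
  have hm : ⌊t * 2 ^ n⌋₊ = m / 2 := by
    rw [← Nat.floor_div_ofNat, pow_succ, ← mul_assoc, mul_div_cancel_right₀ _ two_ne_zero]
  have hlevel : dyadicFloor n t = ((2 * (m / 2) : ℕ) : ℝ) / 2 ^ (n + 1) := by
    rw [dyadicFloor, hm, pow_succ]
    push_cast
    field_simp
  refine ⟨2 * (m / 2), hlevel, ?_⟩
  rw [hlevel, dyadicFloor]
  rcases Nat.even_or_odd' m with ⟨q, hq | hq⟩
  · left
    have : 2 * (m / 2) = m := by omega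
    rw [this]
  · right
    have : 2 * (m / 2) + 1 = m := by omega
    change (m : ℝ) / 2 ^ (n + 1) = _
    conv_lhs => rw [← this]
    push_cast
    ring

lemma dyadicFloor_eq_or_eq_succ {n : ℕ} {s t : ℝ} (hs : 0 ≤ s) (hst : s ≤ t)
    (h : t - s ≤ 1 / 2 ^ n) :
    dyadicFloor n t = dyadicFloor n s ∨ dyadicFloor n t = (⌊s * 2 ^ n⌋₊ + 1) / 2 ^ n := by
  have h2n : (0 : ℝ) < 2 ^ n := by positivity
  have hle : ⌊s * 2 ^ n⌋₊ ≤ ⌊t * 2 ^ n⌋₊ := Nat.floor_le_floor (by gcongr)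
  have hlt : ⌊t * 2 ^ n⌋₊ < ⌊s * 2 ^ n⌋₊ + 2 := by
    rw [Nat.floor_lt (mul_nonneg (hs.trans hst) h2n.le)]
    rw [le_div_iff₀ h2n, sub_mul] at h
    push_cast
    linarith [Nat.lt_floor_add_one (s * 2 ^ n)]
  rcases (by omega : ⌊t * 2 ^ n⌋₊ = ⌊s * 2 ^ n⌋₊ ∨ ⌊t * 2 ^ n⌋₊ = ⌊s * 2 ^ n⌋₊ + 1) with h' | h'
  · left; rw [dyadicFloor, dyadicFloor, h']
  · right; rw [dyadicFloor, h']; push_cast; rfl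

section Chaining

variable {f : ℝ → ℝ} {L a θ : ℝ} {n₀ : ℕ}

lemma abs_sub_dyadicFloor_succ_le {n : ℕ} {b : ℝ} (hb : 0 ≤ b)
    (H : ∀ k : ℕ, (k : ℝ) / 2 ^ (n + 1) ≤ L → |f ((k + 1) / 2 ^ (n + 1)) - f (k / 2 ^ (n + 1))| ≤ b)
    {t : ℝ} (ht : t ∈ Icc 0 L) : |f (dyadicFloor (n + 1) t) - f (dyadicFloor n t)| ≤ b := by
  obtain ⟨k, hk, hstay | hstep⟩ := dyadicFloor_succ n t
  · simpa [hstay] using hb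
  · rw [hstep, hk]
    exact H k (hk ▸ (dyadicFloor_le ht.1 n).trans ht.2)

lemma abs_sub_dyadicFloor_le (hf : Continuous f) (ha : 0 ≤ a) (hθ0 : 0 ≤ θ) (hθ1 : θ < 1)
    (H : ∀ j k : ℕ, (k : ℝ) / 2 ^ (n₀ + j) ≤ L →
      |f ((k + 1) / 2 ^ (n₀ + j)) - f (k / 2 ^ (n₀ + j))| ≤ a * θ ^ j)
    {t : ℝ} (ht : t ∈ Icc 0 L) : |f t - f (dyadicFloor n₀ t)| ≤ a * θ / (1 - θ) := by
  have hchain : ∀ j, |f (dyadicFloor (n₀ + j) t) - f (dyadicFloor n₀ t)| ≤ a * θ / (1 - θ) := by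
    intro j
    have htele := Finset.sum_range_sub (fun i ↦ f (dyadicFloor (n₀ + i) t)) j
    rw [add_zero] at htele
    rw [← htele]
    calc |∑ i ∈ Finset.range j, (f (dyadicFloor (n₀ + (i + 1)) t) - f (dyadicFloor (n₀ + i) t))|
        ≤ ∑ i ∈ Finset.range j, a * θ * θ ^ i := by
          refine (Finset.abs_sum_le_sum_abs _ _).trans (Finset.sum_le_sum fun i _ ↦ ?_)
          rw [mul_assoc, ← pow_succ']
          exact abs_sub_dyadicFloor_succ_le (by positivity) (H (i + 1)) ht
      _ = a * θ * ∑ i ∈ Finset.Ico 0 j, θ ^ i := by rw [Finset.mul_sum, Finset.range_eq_Ico]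
      _ ≤ a * θ * (θ ^ 0 / (1 - θ)) := by
          gcongr
          exact geom_sum_Ico_le_of_lt_one hθ0 hθ1
      _ = a * θ / (1 - θ) := by ring
  have hlim : Tendsto (fun j ↦ |f (dyadicFloor (n₀ + j) t) - f (dyadicFloor n₀ t)|) atTop
      (𝓝 |f t - f (dyadicFloor n₀ t)|) :=
    (((hf.tendsto t).comp ((tendsto_dyadicFloor ht.1).comp (tendsto_atTop_mono
      (Nat.le_add_left · n₀) tendsto_id))).sub tendsto_const_nhds).abs
  exact le_of_tendsto' hlim hchain

theorem abs_sub_le_of_dyadic_increments (hf : Continuous f) (hθ0 : 0 ≤ θ) (hθ1 : θ < 1)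
    (H : ∀ j k : ℕ, (k : ℝ) / 2 ^ (n₀ + j) ≤ L →
      |f ((k + 1) / 2 ^ (n₀ + j)) - f (k / 2 ^ (n₀ + j))| ≤ a * θ ^ j)
    {s t : ℝ} (hs : s ∈ Icc 0 L) (ht : t ∈ Icc 0 L) (hst : |t - s| ≤ 1 / 2 ^ n₀) :
    |f t - f s| ≤ a * (1 + θ) / (1 - θ) := by
  have ha : 0 ≤ a := by simpa using (abs_nonneg _).trans (H 0 0 (by simpa using hs.1.trans hs.2))
  wlog hle : s ≤ t generalizing s t
  · rw [abs_sub_comm]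
    exact this ht hs (by rwa [abs_sub_comm]) (le_of_not_ge hle)
  have hmid : |f (dyadicFloor n₀ t) - f (dyadicFloor n₀ s)| ≤ a := by
    rcases dyadicFloor_eq_or_eq_succ hs.1 hle (le_of_abs_le hst) with h | h
    · simpa [h] using ha
    · have hk : (⌊s * 2 ^ n₀⌋₊ : ℝ) / 2 ^ n₀ ≤ L := (dyadicFloor_le hs.1 n₀).trans hs.2
      rw [h]
      simpa [dyadicFloor] using H 0 _ (by simpa using hk)
  have hfs := abs_sub_dyadicFloor_le hf ha hθ0 hθ1 H hs
  have hft := abs_sub_dyadicFloor_le hf ha hθ0 hθ1 H ht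
  calc |f t - f s|
      ≤ |f t - f (dyadicFloor n₀ t)| + |f (dyadicFloor n₀ t) - f (dyadicFloor n₀ s)|
        + |f (dyadicFloor n₀ s) - f s| := by
        linarith [abs_sub_le (f t) (f (dyadicFloor n₀ t)) (f s),
          abs_sub_le (f (dyadicFloor n₀ t)) (f (dyadicFloor n₀ s)) (f s)]
    _ ≤ a * θ / (1 - θ) + a + a * θ / (1 - θ) := by
        rw [abs_sub_comm (f (dyadicFloor n₀ s))]
        gcongr
    _ = a * (1 + θ) / (1 - θ) := by
        have : 1 - θ ≠ 0 := by linarith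
        field_simp
        ring

end Chaining

lemma four_pow_mul_exp_neg_le {E : ℝ} (hE : 16 ≤ E) (j : ℕ) :
    4 ^ j * exp (-(E * (9 / 8) ^ j)) ≤ exp (-E) := by
  have hgrowth : E + 2 * j ≤ E * (9 / 8) ^ j := by
    have := one_add_mul_le_pow (by norm_num : (-2 : ℝ) ≤ 1 / 8) j
    norm_num at this
    nlinarith [(Nat.cast_nonneg j : (0 : ℝ) ≤ j)]
  have h4 : (4 : ℝ) ≤ exp 2 := by
    have := add_one_le_exp (1 : ℝ)
    rw [show (2 : ℝ) = 1 + 1 by norm_num, exp_add]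
    nlinarith
  calc 4 ^ j * exp (-(E * (9 / 8) ^ j)) ≤ exp 2 ^ j * exp (-(E * (9 / 8) ^ j)) := by gcongr
    _ = exp (2 * j - E * (9 / 8) ^ j) := by
        rw [← exp_nat_mul, ← exp_add]; ring_nf
    _ ≤ exp (-E) := by gcongr; linarith

lemma dyadic_count_mul_exp_neg_le {L E : ℝ} (hL : 0 ≤ L) (hE : 16 ≤ E) (n₀ j : ℕ) :
    (⌊L * 2 ^ (n₀ + j)⌋₊ + 1 : ℝ) * (2 * exp (-(E * (9 / 8) ^ j)))
      ≤ 2 * (L + 1) * 2 ^ n₀ * exp (-E) * (1 / 2) ^ j := by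
  have hcount : (⌊L * 2 ^ (n₀ + j)⌋₊ + 1 : ℝ) ≤ (L + 1) * 2 ^ n₀ * 2 ^ j := by
    have hfloor := Nat.floor_le (show 0 ≤ L * 2 ^ (n₀ + j) by positivity)
    have hone : (1 : ℝ) ≤ 2 ^ (n₀ + j) := one_le_pow₀ one_le_two
    rw [pow_add] at hfloor hone ⊢
    nlinarith
  have hdecay := four_pow_mul_exp_neg_le hE j
  rw [show (4 : ℝ) ^ j = 2 ^ j * 2 ^ j by rw [← mul_pow]; norm_num] at hdecay
  calc (⌊L * 2 ^ (n₀ + j)⌋₊ + 1 : ℝ) * (2 * exp (-(E * (9 / 8) ^ j)))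
      ≤ (L + 1) * 2 ^ n₀ * 2 ^ j * (2 * exp (-(E * (9 / 8) ^ j))) := by gcongr
    _ = 2 * (L + 1) * 2 ^ n₀ * (1 / 2) ^ j * (2 ^ j * 2 ^ j * exp (-(E * (9 / 8) ^ j))) := by
        rw [one_div_pow]; field_simp
    _ ≤ 2 * (L + 1) * 2 ^ n₀ * (1 / 2) ^ j * exp (-E) := by gcongr
    _ = 2 * (L + 1) * 2 ^ n₀ * exp (-E) * (1 / 2) ^ j := by ring

namespace IsStandardBM

variable {Ω : Type*} [MeasureSpace Ω] [IsProbabilityMeasure (volume : Measure Ω)]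
  {W : ℝ → Ω → ℝ}

lemma measure_abs_sub_ge_le (hW : IsStandardBM W) {s t c : ℝ} (hs : 0 ≤ s) (hst : s < t)
    (hc : 0 ≤ c) :
    volume {ω | c ≤ |W t ω - W s ω|} ≤ ENNReal.ofReal (2 * exp (-c ^ 2 / (2 * (t - s)))) := by
  have := measure_abs_ge_le_of_map_eq_gaussianReal (hW.2.2.1 s t hs hst.le) hc
  rwa [Real.coe_toNNReal _ (sub_nonneg.2 hst.le)] at this

lemma measure_dyadic_increment_gt_le (hW : IsStandardBM W) (m k : ℕ) {c : ℝ} (hc : 0 ≤ c) :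
    volume {ω | c < |W ((k + 1) / 2 ^ m) ω - W (k / 2 ^ m) ω|}
      ≤ ENNReal.ofReal (2 * exp (-(c ^ 2 * 2 ^ m / 2))) := by
  have h2m : (0 : ℝ) < 2 ^ m := by positivity
  have hlt : (k : ℝ) / 2 ^ m < (k + 1) / 2 ^ m := by gcongr; linarith
  refine (measure_mono fun ω (hω : c < _) ↦ hω.le).trans
    ((hW.measure_abs_sub_ge_le (by positivity) hlt hc).trans_eq ?_)
  rw [← sub_div, add_sub_cancel_left]
  field_simp

theorem measure_exists_dyadic_increment_gt_le (hW : IsStandardBM W) {L a : ℝ} (hL : 0 ≤ L)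
    (ha : 0 ≤ a) (n₀ : ℕ) (hE : 32 ≤ a ^ 2 * 2 ^ n₀) :
    volume {ω | ∃ j k : ℕ, (k : ℝ) / 2 ^ (n₀ + j) ≤ L ∧
        a * (3 / 4) ^ j < |W ((k + 1) / 2 ^ (n₀ + j)) ω - W (k / 2 ^ (n₀ + j)) ω|}
      ≤ ENNReal.ofReal (4 * (L + 1) * 2 ^ n₀ * exp (-(a ^ 2 * 2 ^ n₀ / 2))) := by
  set E := a ^ 2 * 2 ^ n₀ / 2
  have hE16 : 16 ≤ E := by simp only [E]; linarith
  set K := 2 * (L + 1) * 2 ^ n₀ * exp (-E)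
  set N : ℕ → ℕ := fun j ↦ ⌊L * 2 ^ (n₀ + j)⌋₊ + 1
  set A : ℕ → ℕ → Set Ω := fun j k ↦
    {ω | a * (3 / 4) ^ j < |W ((k + 1) / 2 ^ (n₀ + j)) ω - W (k / 2 ^ (n₀ + j)) ω|}
  have hcover : {ω | ∃ j k : ℕ, (k : ℝ) / 2 ^ (n₀ + j) ≤ L ∧
      a * (3 / 4) ^ j < |W ((k + 1) / 2 ^ (n₀ + j)) ω - W (k / 2 ^ (n₀ + j)) ω|}
        ⊆ ⋃ j, ⋃ k ∈ Finset.range (N j), A j k := by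
    rintro ω ⟨j, k, hk, hω⟩
    refine mem_iUnion.2 ⟨j, mem_iUnion₂.2 ⟨k, Finset.mem_range.2 (Nat.lt_succ_of_le
      (Nat.le_floor ?_)), hω⟩⟩
    rwa [div_le_iff₀ (by positivity)] at hk
  have hA : ∀ j k, volume (A j k) ≤ ENNReal.ofReal (2 * exp (-(E * (9 / 8) ^ j))) := by
    intro j k
    refine (hW.measure_dyadic_increment_gt_le _ k (by positivity)).trans_eq ?_
    have h98 : (((3 : ℝ) / 4) ^ j) ^ 2 * 2 ^ j = (9 / 8) ^ j := by
      rw [← pow_mul, mul_comm j, pow_mul, ← mul_pow]; norm_num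
    have hexponent : (a * (3 / 4) ^ j) ^ 2 * 2 ^ (n₀ + j) / 2 = E * (9 / 8) ^ j := by
      rw [← h98, pow_add]; ring
    rw [hexponent]
  have hlevel : ∀ j, volume (⋃ k ∈ Finset.range (N j), A j k)
      ≤ ENNReal.ofReal (K * (1 / 2) ^ j) := by
    intro j
    calc volume (⋃ k ∈ Finset.range (N j), A j k)
        ≤ ∑ k ∈ Finset.range (N j), ENNReal.ofReal (2 * exp (-(E * (9 / 8) ^ j))) :=
          (measure_biUnion_finset_le _ _).trans (Finset.sum_le_sum fun k _ ↦ hA j k)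
      _ = ENNReal.ofReal (N j * (2 * exp (-(E * (9 / 8) ^ j)))) := by
          rw [Finset.sum_const, Finset.card_range, nsmul_eq_mul, ← ENNReal.ofReal_natCast,
            ← ENNReal.ofReal_mul (by positivity)]
      _ ≤ ENNReal.ofReal (K * (1 / 2) ^ j) :=
          ENNReal.ofReal_le_ofReal (by simpa [N] using dyadic_count_mul_exp_neg_le hL hE16 n₀ j)
  calc _ ≤ volume (⋃ j, ⋃ k ∈ Finset.range (N j), A j k) := measure_mono hcover
    _ ≤ ∑' j, ENNReal.ofReal (K * (1 / 2) ^ j) :=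
        (measure_iUnion_le _).trans (ENNReal.tsum_le_tsum hlevel)
    _ = ENNReal.ofReal (4 * (L + 1) * 2 ^ n₀ * exp (-E)) := by
        rw [← ENNReal.ofReal_tsum_of_nonneg (fun j ↦ by positivity)
          ((summable_geometric_two).mul_left K), tsum_mul_left, tsum_geometric_two]
        congr 1
        ring

theorem measure_modulus_ge_le (hW : IsStandardBM W) {L δ η : ℝ} (hL : 0 ≤ L) (hδ : 0 < δ)
    (hδ1 : δ ≤ 1) (hη : 0 < η) (hηδ : 4096 * δ ≤ η ^ 2) :
    volume {ω | ∃ t₁ ∈ Icc 0 L, ∃ t₂ ∈ Icc 0 L, |t₂ - t₁| ≤ δ ∧ η ≤ |W t₂ ω - W t₁ ω|}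
      ≤ ENNReal.ofReal (4 * (L + 1) / δ * exp (-(η ^ 2 / (256 * δ)))) := by
  obtain ⟨n₀, hlow, hhigh⟩ := exists_nat_pow_near (one_le_one_div hδ hδ1) one_lt_two
  have hscale : δ ≤ 1 / 2 ^ n₀ := by
    rwa [le_div_iff₀ (by positivity), mul_comm, ← le_div_iff₀ hδ]
  have hexponent : η ^ 2 / (256 * δ) ≤ (η / 8) ^ 2 * 2 ^ n₀ / 2 := by
    have : 1 / δ ≤ 2 * 2 ^ n₀ := by rw [pow_succ] at hhigh; linarith
    calc η ^ 2 / (256 * δ) = η ^ 2 / 256 * (1 / δ) := by field_simp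
      _ ≤ η ^ 2 / 256 * (2 * 2 ^ n₀) := by gcongr
      _ = (η / 8) ^ 2 * 2 ^ n₀ / 2 := by ring
  have hlarge : 16 ≤ η ^ 2 / (256 * δ) := by rw [le_div_iff₀ (by positivity)]; linarith
  have hbad : {ω | ∃ t₁ ∈ Icc 0 L, ∃ t₂ ∈ Icc 0 L, |t₂ - t₁| ≤ δ ∧ η ≤ |W t₂ ω - W t₁ ω|} ⊆
      {ω | ∃ j k : ℕ, (k : ℝ) / 2 ^ (n₀ + j) ≤ L ∧
        η / 8 * (3 / 4) ^ j < |W ((k + 1) / 2 ^ (n₀ + j)) ω - W (k / 2 ^ (n₀ + j)) ω|} := by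
    rintro ω ⟨t₁, h₁, t₂, h₂, hclose, hfar⟩
    by_contra hgood
    simp only [mem_ofPred_eq, not_exists, not_and, not_lt] at hgood
    have := abs_sub_le_of_dyadic_increments (hW.2.1 ω) (by norm_num) (by norm_num) hgood h₁ h₂
      (hclose.trans hscale)
    linarith [show η / 8 * (1 + 3 / 4) / (1 - 3 / 4) = 7 / 8 * η by ring]
  refine (measure_mono hbad).trans ((hW.measure_exists_dyadic_increment_gt_le hL (by positivity)
    n₀ (by linarith)).trans (ENNReal.ofReal_le_ofReal ?_))
  rw [div_eq_mul_inv (4 * (L + 1))]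
  gcongr
  rwa [one_div] at hlow

end IsStandardBM

lemma tendsto_rpow_mul_exp_neg_mul_rpow_atTop_nhds_zero (s : ℝ) {b κ : ℝ} (hb : 0 < b)
    (hκ : 0 < κ) : Tendsto (fun x : ℝ ↦ x ^ s * exp (-b * x ^ κ)) atTop (𝓝 0) := by
  refine ((tendsto_rpow_mul_exp_neg_mul_atTop_nhds_zero (s / κ) b hb).comp
    (tendsto_rpow_atTop hκ)).congr' ?_
  filter_upwards [eventually_ge_atTop 0] with x hx
  simp [← rpow_mul hx, mul_div_cancel₀ _ hκ.ne']

lemma tsum_measure_ne_top_of_eventually_le_ofReal {α : Type*} [MeasurableSpace α]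
    {μ : Measure α} [IsFiniteMeasure μ] {s : ℕ → Set α} {g : ℕ → ℝ} (hg : Summable g)
    (hle : ∀ᶠ n in atTop, μ (s n) ≤ ENNReal.ofReal (g n)) : ∑' n, μ (s n) ≠ ⊤ := by
  have hsum : Summable fun n ↦ μ.real (s n) := by
    refine Summable.of_norm_bounded_eventually_nat hg.abs (hle.mono fun n hn ↦ ?_)
    rw [norm_of_nonneg measureReal_nonneg]
    exact ENNReal.toReal_le_of_le_ofReal (abs_nonneg _)
      (hn.trans (ENNReal.ofReal_le_ofReal (le_abs_self _)))
  rw [show (fun n ↦ μ (s n)) = fun n ↦ ENNReal.ofReal (μ.real (s n)) from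
    funext fun n ↦ (ofReal_measureReal).symm,
    ← ENNReal.ofReal_tsum_of_nonneg (fun _ ↦ measureReal_nonneg) hsum]
  exact ENNReal.ofReal_ne_top

lemma rpow_neg_one_div_eight_sq {x : ℝ} (hx : 0 < x) (ε : ℝ) :
    (x ^ (-(1 : ℝ) / 8)) ^ 2 = x ^ (-(1 : ℝ) / 2 + ε) * x ^ (1 / 4 - ε) := by
  rw [← rpow_natCast, ← rpow_mul hx.le, ← rpow_add hx]
  norm_num

lemma eventually_modulus_scale {C ε : ℝ} (hε : ε < 1 / 4) :
    ∀ᶠ x : ℝ in atTop, C * x ^ (-(1 : ℝ) / 2 + ε) ≤ 1 ∧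
      4096 * (C * x ^ (-(1 : ℝ) / 2 + ε)) ≤ (x ^ (-(1 : ℝ) / 8)) ^ 2 := by
  filter_upwards [(tendsto_rpow_atTop (by linarith : 0 < 1 / 4 - ε)).eventually_ge_atTop
    (4096 * C), eventually_ge_atTop 1] with x hlarge hx
  have hx0 : 0 < x := by linarith
  have hδ : 0 < x ^ (-(1 : ℝ) / 2 + ε) := rpow_pos_of_pos hx0 _
  have hη : 4096 * (C * x ^ (-(1 : ℝ) / 2 + ε)) ≤ (x ^ (-(1 : ℝ) / 8)) ^ 2 := by
    rw [rpow_neg_one_div_eight_sq hx0 ε]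
    nlinarith
  have hη1 : (x ^ (-(1 : ℝ) / 8)) ^ 2 ≤ 1 :=
    pow_le_one₀ (by positivity) (rpow_le_one_of_one_le_of_nonpos hx (by norm_num))
  exact ⟨by nlinarith, hη⟩

lemma eventually_modulus_bound_le_inv_sq {T C ε : ℝ} (hT : 0 < T) (hC : 0 < C)
    (hε : ε ∈ Ioo (0 : ℝ) (1 / 4)) :
    ∀ᶠ x : ℝ in atTop, 4 * (T * log x + 1) / (C * x ^ (-(1 : ℝ) / 2 + ε))
      * exp (-((x ^ (-(1 : ℝ) / 8)) ^ 2 / (256 * (C * x ^ (-(1 : ℝ) / 2 + ε))))) ≤ 1 / x ^ 2 := by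
  have hκ : 0 < 1 / 4 - ε := by linarith [hε.2]
  have hdecay := (tendsto_rpow_mul_exp_neg_mul_rpow_atTop_nhds_zero 4
    (by positivity : 0 < 1 / (256 * C)) hκ).eventually_le_const
    (by positivity : 0 < C / (4 * (T + 1)))
  filter_upwards [hdecay, eventually_ge_atTop 1] with x hdecay hx
  have hx0 : 0 < x := by linarith
  have hinv : 1 / x ^ (-(1 : ℝ) / 2 + ε) ≤ x := by
    rw [one_div, ← rpow_neg hx0.le]
    calc x ^ (-(-(1 : ℝ) / 2 + ε)) ≤ x ^ (1 : ℝ) :=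
          rpow_le_rpow_of_exponent_le hx (by linarith [hε.1])
      _ = x := rpow_one x
  have hlog : T * log x + 1 ≤ (T + 1) * x := by
    nlinarith [log_le_sub_one_of_pos hx0]
  rw [rpow_ofNat] at hdecay
  set u := x ^ (-(1 : ℝ) / 2 + ε)
  set y := x ^ (1 / 4 - ε)
  have hu : 0 < u := by positivity
  rw [rpow_neg_one_div_eight_sq hx0 ε,
    show u * y / (256 * (C * u)) = 1 / (256 * C) * y by field_simp]
  calc 4 * (T * log x + 1) / (C * u) * exp (-(1 / (256 * C) * y))
      = 4 / C * (T * log x + 1) * (1 / u) * exp (-(1 / (256 * C)) * y) := by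
        field_simp
    _ ≤ 4 / C * ((T + 1) * x) * x * exp (-(1 / (256 * C)) * y) := by gcongr
    _ = 4 * (T + 1) / C / x ^ 2 * (x ^ 4 * exp (-(1 / (256 * C)) * y)) := by
        field_simp
    _ ≤ 4 * (T + 1) / C / x ^ 2 * (C / (4 * (T + 1))) := by gcongr
    _ = 1 / x ^ 2 := by field_simp

open Filter in
theorem stmt_5 {Ω : Type*} [MeasureSpace Ω] [IsProbabilityMeasure (volume : Measure Ω)]
    (B : ℕ → ℝ → Ω → ℝ) (hB : ∀ r, IsStandardBM (B r))
    (T C ε : ℝ) (hT : 0 < T) (hC : 0 < C) (hε : ε ∈ Set.Ioo (0:ℝ) (1/4)) :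
    ∀ᵐ ω ∂(volume : Measure Ω), ∀ᶠ r : ℕ in atTop,
      ∀ t₁ ∈ Set.Icc (0:ℝ) (T * Real.log r), ∀ t₂ ∈ Set.Icc (0:ℝ) (T * Real.log r),
        |t₂ - t₁| ≤ C * (r : ℝ) ^ (-(1:ℝ)/2 + ε) →
          |B r t₂ ω - B r t₁ ω| < (r : ℝ) ^ (-(1:ℝ)/8) := by
  have hbad : ∀ᶠ r : ℕ in atTop, volume {ω | ∃ t₁ ∈ Icc 0 (T * log r), ∃ t₂ ∈ Icc 0 (T * log r),
      |t₂ - t₁| ≤ C * (r : ℝ) ^ (-(1 : ℝ) / 2 + ε) ∧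
        (r : ℝ) ^ (-(1 : ℝ) / 8) ≤ |B r t₂ ω - B r t₁ ω|} ≤ ENNReal.ofReal (1 / (r : ℝ) ^ 2) := by
    filter_upwards [tendsto_natCast_atTop_atTop.eventually
      ((eventually_modulus_scale (C := C) hε.2).and (eventually_modulus_bound_le_inv_sq hT hC hε)),
      eventually_ge_atTop 1] with r ⟨⟨hδ1, hηδ⟩, hbound⟩ hr
    have hr0 : (0 : ℝ) < r := by exact_mod_cast hr
    exact ((hB r).measure_modulus_ge_le (mul_nonneg hT.le (log_nonneg (by exact_mod_cast hr)))
      (by positivity) hδ1 (by positivity) hηδ).trans (ENNReal.ofReal_le_ofReal hbound)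
  filter_upwards [ae_eventually_notMem (tsum_measure_ne_top_of_eventually_le_ofReal
    (summable_one_div_nat_pow.2 one_lt_two) hbad)] with ω hω
  filter_upwards [hω] with r hr t₁ h₁ t₂ h₂ hclose
  simp only [not_exists, not_and, not_le] at hr
  exact hr t₁ h₁ t₂ h₂ hclose
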